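/- arXiv:1603.02033 — 2 statements merged into one kernel-verified Lean document; each statement's English description precedes it below -/
import Mathlib

section
/- If k₁ + k₂ + k₃ = 0, then the cubic-vertex cochain is represented by the YM bracket: B([ξ₁,ξ₂]_YM, ξ₃) = v₃((ξ₁,k₁),(ξ₂,k₂),(ξ₃,k₃)), where [ξ₁,ξ₂]_YM := 2(ξ₁·k₂)ξ₂ − 2(ξ₂·k₁)ξ₁ + (ξ₁·ξ₂)(k₁−k₂) + (ξ₁·k₁)ξ₂ − (ξ₂·k₂)ξ₁. -/
namespace Stmt2

variable {V : Type*} [AddCommGroup V] [Module ℝ V]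

/-- The cubic-vertex cochain `v₃` on three modes. -/
def v₃ (B : LinearMap.BilinForm ℝ V) (p q r : V × V) : ℝ :=
  B q.1 r.2 * B p.1 r.1 - B p.1 r.2 * B q.1 r.1
    + B r.1 p.2 * B q.1 p.1 - B q.1 p.2 * B r.1 p.1
    + B p.1 q.2 * B r.1 q.1 - B r.1 q.2 * B p.1 q.1

/-- The YM bracket of modes: polarization
`[ξ₁,ξ₂]_YM = 2(ξ₁·k₂)ξ₂ − 2(ξ₂·k₁)ξ₁ + (ξ₁·ξ₂)(k₁−k₂) + (ξ₁·k₁)ξ₂ − (ξ₂·k₂)ξ₁`,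
momentum `k₁+k₂`. -/
def ymMode (B : LinearMap.BilinForm ℝ V) (p q : V × V) : V × V :=
  ((2 * B p.1 q.2) • q.1 - (2 * B q.1 p.2) • p.1 + B p.1 q.1 • (p.2 - q.2)
    + B p.1 p.2 • q.1 - B q.1 q.2 • p.1, p.2 + q.2)

theorem ymMode_fst_apply (B : LinearMap.BilinForm ℝ V) (p q : V × V) (z : V) :
    B (ymMode B p q).1 z =
      2 * B p.1 q.2 * B q.1 z - 2 * B q.1 p.2 * B p.1 z + B p.1 q.1 * (B p.2 z - B q.2 z)
        + B p.1 p.2 * B q.1 z - B q.1 q.2 * B p.1 z := by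
  simp only [ymMode, map_add, map_sub, map_smul, LinearMap.add_apply, LinearMap.sub_apply,
    LinearMap.smul_apply, smul_eq_mul]

/-- If `k₁ + k₂ + k₃ = 0`, the cubic-vertex cochain is represented by the YM
bracket: `B([ξ₁,ξ₂]_YM, ξ₃) = v₃`. -/
theorem ym_represents_v₃ (B : LinearMap.BilinForm ℝ V) (hB : B.IsSymm)
    (ξ₁ k₁ ξ₂ k₂ ξ₃ k₃ : V) (h : k₁ + k₂ + k₃ = 0) :
    B (ymMode B (ξ₁, k₁) (ξ₂, k₂)).1 ξ₃ = v₃ B (ξ₁, k₁) (ξ₂, k₂) (ξ₃, k₃) := by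
  obtain rfl : k₃ = -(k₁ + k₂) := eq_neg_of_add_eq_zero_right h
  rw [ymMode_fst_apply, v₃]
  simp only [map_neg, map_add, hB.eq ξ₂ k₁, hB.eq ξ₃ k₁, hB.eq ξ₃ k₂, hB.eq ξ₂ ξ₁,
    hB.eq ξ₃ ξ₁, hB.eq ξ₃ ξ₂]
  ring

end Stmt2
end

section
/- Twisting by a classical r-matrix yields a Lie bracket on the dual: let r : 𝔤* → 𝔤 be a linear map that is skew (β(r(α)) = −α(r(β)) for all α,β ∈ 𝔤*) and define [α,β]_r := coad_{r(α)} β − coad_{r(β)} α on 𝔤*. If r satisfies the classical Yang–Baxter condition r([α,β]_r) = [r(α), r(β)] for all α,β ∈ 𝔤*, then [·,·]_r satisfies the Jacobi identity: [[α,β]_r,γ]_r + [[β,γ]_r,α]_r + [[γ,α]_r,β]_r = 0 for all α,β,γ ∈ 𝔤*. -/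
namespace Stmt13

variable {K : Type*} [Field K] {L : Type*} [LieRing L] [LieAlgebra K L]

/-- The coadjoint action of `x : 𝔤` on `α : 𝔤*`: `(coad_x α)(y) = −α(⁅x,y⁆)`. -/
def coad (x : L) (α : Module.Dual K L) : Module.Dual K L :=
  -(α ∘ₗ (LieAlgebra.ad K L x))

/-- The bracket on `𝔤*` induced by a classical r-matrix `r : 𝔤* → 𝔤`:
`[α,β]_r = coad_{r(α)} β − coad_{r(β)} α`. -/
def rBracket (r : Module.Dual K L →ₗ[K] L) (α β : Module.Dual K L) :
    Module.Dual K L :=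
  coad (r α) β - coad (r β) α

/-- If `r` is skew and satisfies the classical Yang–Baxter condition
`r([α,β]_r) = ⁅r(α), r(β)⁆`, then `[·,·]_r` satisfies the Jacobi identity. -/
theorem rBracket_jacobi (r : Module.Dual K L →ₗ[K] L)
    (hskew : ∀ α β : Module.Dual K L, β (r α) = -α (r β))
    (hCYBE : ∀ α β : Module.Dual K L, r (rBracket r α β) = ⁅r α, r β⁆)
    (α β γ : Module.Dual K L) :
    rBracket r (rBracket r α β) γ + rBracket r (rBracket r β γ) α
      + rBracket r (rBracket r γ α) β = 0 := by
  have h : ∀ a b : Module.Dual K L, -r (b ∘ₗ LieAlgebra.ad K L (r a)) - -r (a ∘ₗ LieAlgebra.ad K L (r b)) = ⁅r a, r b⁆ := by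
    intro a b
    have := hCYBE a b
    simpa [rBracket, coad, map_sub, map_neg] using this
  ext y
  simp only [rBracket, h, coad, LinearMap.add_apply, LinearMap.sub_apply,
    LinearMap.neg_apply, LinearMap.comp_apply, LieAlgebra.ad_apply, map_sub, map_neg,
    LinearMap.zero_apply, lie_lie, map_add]
  ring

end Stmt13
end
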